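/- For every lattice L ⊂ ℝ² of covolume 1 and every continuous L-periodic function f : ℝ² → ℝ with f > 0, the metric g = f²(dx²+dy²) satisfies Loewner's torus inequality with isosystolic defect: area(g) − (√3/2)·sys(g)² ≥ var(f). -/

import Mathlib

open MeasureTheory intervalIntegral

/-- A path `γ : [0,1] → ℂ ≅ ℝ²` is piecewise `C¹` with derivative `γ'` if it is continuous
on `[0,1]` and there is a finite partition `0 = t₀ < t₁ < ⋯ < tₙ = 1` such that on each
closed piece the derivative of `γ` extends to a continuous function agreeing with `γ'`
in the interior of the piece. -/
def IsPiecewiseC1Path (γ γ' : ℝ → ℂ) : Prop :=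
  ContinuousOn γ (Set.Icc 0 1) ∧
  ∃ (n : ℕ) (t : ℕ → ℝ), 0 < n ∧ t 0 = 0 ∧ t n = 1 ∧
    (∀ i < n, t i < t (i + 1)) ∧
    ∀ i < n, ∃ d : ℝ → ℂ, ContinuousOn d (Set.Icc (t i) (t (i + 1))) ∧
      ∀ x ∈ Set.Ioo (t i) (t (i + 1)), HasDerivAt γ (d x) x ∧ γ' x = d x

/-- The length of a path `γ` with derivative `γ'` in the conformal metric `f²(dx²+dy²)`. -/
noncomputable def gLength (f : ℂ → ℝ) (γ γ' : ℝ → ℂ) : ℝ :=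
  ∫ t in (0:ℝ)..1, f (γ t) * ‖γ' t‖

/-- The systole of the metric `f²(dx²+dy²)` on the torus `ℝ²/L`: the infimum of lengths of
piecewise `C¹` paths whose endpoint difference is a nonzero lattice vector. -/
noncomputable def systole (L : Set ℂ) (f : ℂ → ℝ) : ℝ :=
  sInf { ℓ : ℝ | ∃ γ γ' : ℝ → ℂ, IsPiecewiseC1Path γ γ' ∧
    γ 1 - γ 0 ∈ L ∧ γ 1 - γ 0 ≠ 0 ∧ ℓ = gLength f γ γ' }

/-! By Gauss reduction, a lattice of covolume `1` in the plane contains a nonzero vector `z` with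
`√3 · ‖z‖² ≤ 2`: take `z` shortest among the vectors that extend to a basis `(z, u)` of the
lattice and reduce `u` modulo `z`; then `‖z‖ ≤ ‖u‖` and `|⟪z, u⟫| ≤ ‖z‖² / 2`, so
`1 = det(z, u)² ≥ (3/4) ‖z‖⁴`.

Every translate of `f` has the same average `mean` over a fundamental domain, so averaging the
`f`-length of the straight segments from `x` to `x + z` over `x` gives `mean · ‖z‖`. Some such
segment, a closed curve on the torus, is therefore no longer than `mean · ‖z‖`, whence
`(√3/2) · sys² ≤ mean² = area − var`. -/

open Set Function Submodule ProbabilityTheory RealInnerProductSpace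

lemma Set.exists_min_image_of_finite_sublevel {α β : Type*} [LinearOrder β] (s : Set α)
    (f : α → β) (hs : ∀ b, {a ∈ s | f a ≤ b}.Finite) (hne : s.Nonempty) :
    ∃ a ∈ s, ∀ b ∈ s, f a ≤ f b := by
  obtain ⟨x, hx⟩ := hne
  obtain ⟨a, ⟨has, hax⟩, hmin⟩ := exists_min_image _ f (hs (f x)) ⟨x, hx, le_rfl⟩
  refine ⟨a, has, fun b hb => ?_⟩
  by_cases hbx : f b ≤ f x
  · exact hmin b ⟨hb, hbx⟩
  · exact hax.trans (le_of_not_ge hbx)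

section HermiteBound

variable {E : Type*} [NormedAddCommGroup E] [InnerProductSpace ℝ E]

lemma exists_int_abs_inner_sub_intCast_smul_le (z u : E) :
    ∃ k : ℤ, |⟪z, u - (k : ℝ) • z⟫| ≤ ‖z‖ ^ 2 / 2 := by
  rcases eq_or_ne z 0 with rfl | hz
  · exact ⟨0, by simp⟩
  have hz2 : 0 < ‖z‖ ^ 2 := by positivity
  set x := ⟪z, u⟫ / ‖z‖ ^ 2
  refine ⟨round x, ?_⟩
  have : ⟪z, u - (round x : ℝ) • z⟫ = ‖z‖ ^ 2 * (x - round x) := by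
    rw [inner_sub_right, inner_smul_right, real_inner_self_eq_norm_sq, mul_sub,
      mul_div_cancel₀ _ hz2.ne', mul_comm]
  rw [this, abs_mul, abs_of_pos hz2]
  nlinarith [abs_sub_round x]

variable [Fact (Module.finrank ℝ E = 2)] (o : Orientation ℝ E (Fin 2))

local notation "ω" => o.areaForm

namespace Orientation

lemma three_mul_norm_pow_four_le_of_reduced {z u : E} (hzu : ‖z‖ ≤ ‖u‖)
    (hred : |⟪z, u⟫| ≤ ‖z‖ ^ 2 / 2) : 3 * ‖z‖ ^ 4 ≤ 4 * ω z u ^ 2 := by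
  have h := o.inner_sq_add_areaForm_sq z u
  have h1 : ⟪z, u⟫ ^ 2 ≤ (‖z‖ ^ 2 / 2) ^ 2 := sq_le_sq' (abs_le.1 hred).1 (abs_le.1 hred).2
  have h2 : ‖z‖ ^ 2 * ‖z‖ ^ 2 ≤ ‖z‖ ^ 2 * ‖u‖ ^ 2 := by gcongr
  nlinarith

lemma linearIndependent_pair_of_areaForm_ne_zero {v w : E} (h : ω v w ≠ 0) :
    LinearIndependent ℝ ![v, w] := by
  refine LinearIndependent.pair_iff.2 fun s t hst => ⟨?_, ?_⟩
  · simpa [o.areaForm_apply_self, h] using congrArg (fun x => ω x w) hst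
  · simpa [o.areaForm_apply_self, h] using congrArg (fun x => ω v x) hst

lemma finite_inter_span_pair {v w : E} (h : ω v w ≠ 0) {s : Set E}
    (hs : Bornology.IsBounded s) : (s ∩ span ℤ {v, w}).Finite := by
  have : FiniteDimensional ℝ E := .of_fact_finrank_eq_two
  let b := basisOfLinearIndependentOfCardEqFinrank (o.linearIndependent_pair_of_areaForm_ne_zero h)
    (by simpa using (Fact.out : Module.finrank ℝ E = 2).symm)
  simpa [b, Matrix.range_cons, Set.pair_comm] using ZSpan.setFinite_inter b hs

theorem exists_mem_span_pair_ne_zero_sqrt_three_mul_norm_sq_le {v w : E} (h : ω v w ≠ 0) :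
    ∃ z ∈ span ℤ {v, w}, z ≠ 0 ∧ √3 * ‖z‖ ^ 2 ≤ 2 * |ω v w| := by
  set Λ := span ℤ {v, w}
  -- the first vectors of the bases of `Λ` with the orientation of `(v, w)`
  set S := {z | z ∈ Λ ∧ ∃ u ∈ Λ, ω z u = ω v w}
  have hS : ∀ r, {z ∈ S | ‖z‖ ≤ r}.Finite := fun r =>
    (o.finite_inter_span_pair h (Metric.isBounded_closedBall (x := (0 : E)) (r := r))).subset
      fun z ⟨⟨hzΛ, _⟩, hzr⟩ => ⟨by simpa using hzr, hzΛ⟩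
  have hvS : v ∈ S := ⟨subset_span (by simp), w, subset_span (by simp), rfl⟩
  obtain ⟨z, ⟨hzΛ, u, huΛ, hzu⟩, hmin⟩ := S.exists_min_image_of_finite_sublevel (‖·‖) hS ⟨v, hvS⟩
  obtain ⟨k, hk⟩ := exists_int_abs_inner_sub_intCast_smul_le z u
  set u' := u - (k : ℝ) • z
  have hzu' : ω z u' = ω v w := by simp [u', o.areaForm_apply_self, hzu]
  have hu'S : u' ∈ S := by
    refine ⟨Λ.sub_mem huΛ ?_, -z, Λ.neg_mem hzΛ, ?_⟩
    · rw [Int.cast_smul_eq_zsmul]; exact Λ.smul_mem k hzΛ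
    · rw [map_neg, o.areaForm_swap]; simpa using hzu'
  have hz0 : z ≠ 0 := by
    rintro rfl
    exact h (by simpa using hzu.symm)
  refine ⟨z, hzΛ, hz0, ?_⟩
  have key := o.three_mul_norm_pow_four_le_of_reduced (hmin u' hu'S) hk
  rw [hzu'] at key
  have h3 : √3 ^ 2 = 3 := Real.sq_sqrt (by norm_num)
  have : (√3 * ‖z‖ ^ 2) ^ 2 ≤ (2 * |ω v w|) ^ 2 := by
    rw [mul_pow, mul_pow, h3, sq_abs]; linarith
  exact (pow_le_pow_iff_left₀ (by positivity) (by positivity) two_ne_zero).1 this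

end Orientation

end HermiteBound

lemma integral_sub_integral_sq {Ω : Type*} [MeasurableSpace Ω] {μ : Measure Ω}
    [IsProbabilityMeasure μ] {X : Ω → ℝ} (hX : MemLp X 2 μ) :
    ∫ x, (X x - ∫ y, X y ∂μ) ^ 2 ∂μ = ∫ x, X x ^ 2 ∂μ - (∫ x, X x ∂μ) ^ 2 := by
  rw [← variance_eq_integral hX.aemeasurable, variance_eq_sub hX]
  rfl

section UnitSquare

variable {E : Type*} [NormedAddCommGroup E]

lemma Function.Periodic.intervalIntegral_comp_add_right [NormedSpace ℝ E] {g : ℝ → E} {T : ℝ}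
    (hg : Periodic g T) (c : ℝ) : ∫ x in 0..T, g (x + c) = ∫ x in 0..T, g x := by
  rw [intervalIntegral.integral_comp_add_right, zero_add, add_comm,
    hg.intervalIntegral_add_eq c 0, zero_add]

instance : IsProbabilityMeasure (volume.restrict (Ioc (0 : ℝ) 1)) := ⟨by simp⟩

noncomputable abbrev unitSquare : Measure (ℝ × ℝ) :=
  (volume.restrict (Ioc 0 1)).prod (volume.restrict (Ioc 0 1))

lemma unitSquare_eq_restrict : unitSquare = volume.restrict (Ioc 0 1 ×ˢ Ioc 0 1) := by
  rw [unitSquare, Measure.prod_restrict, Measure.volume_eq_prod]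

lemma Continuous.integrable_unitSquare {F : ℝ × ℝ → E} (hF : Continuous F) :
    Integrable F unitSquare := by
  rw [unitSquare_eq_restrict]
  exact (hF.continuousOn.integrableOn_compact (isCompact_Icc.prod isCompact_Icc)).mono_set
    (prod_mono Ioc_subset_Icc_self Ioc_subset_Icc_self)

lemma Continuous.integral_unitSquare [NormedSpace ℝ E] {F : ℝ × ℝ → E} (hF : Continuous F) :
    ∫ p, F p ∂unitSquare = ∫ s in 0..1, ∫ t in 0..1, F (s, t) := by
  simp only [intervalIntegral.integral_of_le zero_le_one]
  exact integral_prod F hF.integrable_unitSquare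

lemma Continuous.intervalIntegral_intervalIntegral_sub_sq {F : ℝ × ℝ → ℝ} (hF : Continuous F) :
    ∫ s in 0..1, ∫ t in 0..1, (F (s, t) - ∫ s in 0..1, ∫ t in 0..1, F (s, t)) ^ 2
      = (∫ s in 0..1, ∫ t in 0..1, F (s, t) ^ 2) - (∫ s in 0..1, ∫ t in 0..1, F (s, t)) ^ 2 := by
  have h := integral_sub_integral_sq
    ((memLp_two_iff_integrable_sq hF.aestronglyMeasurable).2 (hF.pow 2).integrable_unitSquare)
  rwa [hF.integral_unitSquare, Continuous.integral_unitSquare (by fun_prop),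
    Continuous.integral_unitSquare (by fun_prop)] at h

lemma integral_unitSquare_comp_add_of_periodic [NormedSpace ℝ E] {F : ℝ × ℝ → E}
    (hF : Continuous F) (h₁ : Periodic F (1, 0)) (h₂ : Periodic F (0, 1)) (c : ℝ × ℝ) :
    ∫ p, F (p + c) ∂unitSquare = ∫ p, F p ∂unitSquare := by
  have hrow : ∀ s, Periodic (fun t => F (s, t)) 1 := fun s t => by
    simpa using h₂ (s, t)
  have hcol : Periodic (fun s => ∫ t in 0..1, F (s, t)) 1 := fun s => by
    simpa using congrArg (fun F => ∫ t in 0..1, F t) (funext fun t => h₁ (s, t))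
  rw [Continuous.integral_unitSquare (F := fun p => F (p + c)) (by fun_prop),
    hF.integral_unitSquare]
  obtain ⟨a, b⟩ := c
  simp only [Prod.mk_add_mk, (hrow _).intervalIntegral_comp_add_right]
  exact hcol.intervalIntegral_comp_add_right a

lemma integral_unitSquare_intervalIntegral_comp_add_smul [NormedSpace ℝ E] [CompleteSpace E]
    {F : ℝ × ℝ → E} (hF : Continuous F)
    (h₁ : Periodic F (1, 0)) (h₂ : Periodic F (0, 1)) (d : ℝ × ℝ) :
    ∫ p, (∫ τ in 0..1, F (p + τ • d)) ∂unitSquare = ∫ p, F p ∂unitSquare := by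
  rw [← intervalIntegral_integral_swap]
  · simp only [integral_unitSquare_comp_add_of_periodic hF h₁ h₂]
    simp
  · rw [uIoc_of_le zero_le_one, unitSquare_eq_restrict, Measure.prod_restrict,
      ← Measure.volume_eq_prod]
    exact ((Continuous.continuousOn (by fun_prop)).integrableOn_compact
      (isCompact_Icc.prod (isCompact_Icc.prod isCompact_Icc))).mono_set
      (prod_mono Ioc_subset_Icc_self (prod_mono Ioc_subset_Icc_self Ioc_subset_Icc_self))

lemma exists_intervalIntegral_comp_add_smul_le_of_periodic {F : ℝ × ℝ → ℝ} (hF : Continuous F)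
    (h₁ : Periodic F (1, 0)) (h₂ : Periodic F (0, 1)) (d : ℝ × ℝ) :
    ∃ p, ∫ τ in 0..1, F (p + τ • d) ≤ ∫ p, F p ∂unitSquare := by
  have hΦ : Continuous fun p => ∫ τ in 0..1, F (p + τ • d) :=
    continuous_parametric_intervalIntegral_of_continuous' (by fun_prop) 0 1
  rw [← integral_unitSquare_intervalIntegral_comp_add_smul hF h₁ h₂ d]
  exact exists_le_integral hΦ.integrable_unitSquare

lemma exists_intervalIntegral_comp_add_smul_le_integral_unitSquare [NormedSpace ℝ E]
    {f : E → ℝ} (hf : Continuous f) {v w : E} (hv : Periodic f v) (hw : Periodic f w) {z : E}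
    (hz : z ∈ span ℝ {v, w}) :
    ∃ x, ∫ τ in 0..1, f (x + τ • z) ≤ ∫ p, f (p.1 • v + p.2 • w) ∂unitSquare := by
  obtain ⟨a, b, rfl⟩ := mem_span_pair.1 hz
  set F : ℝ × ℝ → ℝ := fun p => f (p.1 • v + p.2 • w)
  have h₁ : Periodic F (1, 0) := fun p => by
    simpa [F, add_smul, add_right_comm] using hv (p.1 • v + p.2 • w)
  have h₂ : Periodic F (0, 1) := fun p => by
    simpa [F, add_smul, add_assoc] using hw (p.1 • v + p.2 • w)
  obtain ⟨p, hp⟩ :=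
    exists_intervalIntegral_comp_add_smul_le_of_periodic (by fun_prop) h₁ h₂ (a, b)
  refine ⟨p.1 • v + p.2 • w, le_of_eq_of_le ?_ hp⟩
  congr 1 with τ
  simp only [F, Prod.fst_add, Prod.snd_add, Prod.smul_fst, Prod.smul_snd, smul_eq_mul,
    add_smul, mul_smul, smul_add]
  abel_nf

end UnitSquare

section Systole

lemma isPiecewiseC1Path_segment (x z : ℂ) :
    IsPiecewiseC1Path (fun τ => x + τ • z) (fun _ => z) := by
  refine ⟨by fun_prop, 1, fun i => i, one_pos, by simp, by simp, by simp, fun i _ =>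
    ⟨fun _ => z, continuousOn_const, fun τ _ => ⟨?_, rfl⟩⟩⟩
  simpa using ((hasDerivAt_id τ).smul_const z).const_add x

variable {f : ℂ → ℝ}

lemma gLength_nonneg (hf : ∀ z, 0 ≤ f z) (γ γ' : ℝ → ℂ) : 0 ≤ gLength f γ γ' :=
  intervalIntegral.integral_nonneg zero_le_one fun _ _ => mul_nonneg (hf _) (norm_nonneg _)

lemma gLength_segment (x z : ℂ) :
    gLength f (fun τ => x + τ • z) (fun _ => z) = (∫ τ in 0..1, f (x + τ • z)) * ‖z‖ :=
  intervalIntegral.integral_mul_const _ _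

lemma systole_nonneg (hf : ∀ z, 0 ≤ f z) (L : Set ℂ) : 0 ≤ systole L f :=
  Real.sInf_nonneg fun _ ⟨_, _, _, _, _, hℓ⟩ => hℓ ▸ gLength_nonneg hf _ _

lemma systole_le_segment (hf : ∀ z, 0 ≤ f z) {L : Set ℂ} {z : ℂ} (hzL : z ∈ L) (hz : z ≠ 0)
    (x : ℂ) : systole L f ≤ (∫ τ in 0..1, f (x + τ • z)) * ‖z‖ := by
  rw [← gLength_segment]
  refine csInf_le ⟨0, fun _ ⟨_, _, _, _, _, hℓ⟩ => hℓ ▸ gLength_nonneg hf _ _⟩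
    ⟨_, _, isPiecewiseC1Path_segment x z, ?_, ?_, rfl⟩ <;> simpa

end Systole

attribute [local instance] Complex.finrank_real_complex_fact

lemma Complex.orientation_areaForm (v w : ℂ) :
    Complex.orientation.areaForm v w = v.re * w.im - v.im * w.re := by
  rw [Complex.areaForm, Complex.mul_im, Complex.conj_re, Complex.conj_im]
  ring

/-- **Loewner's torus inequality with isosystolic defect.**
For every lattice `L = ℤv + ℤw ⊂ ℝ² ≅ ℂ` of covolume `|det(v,w)| = 1` and every continuous
positive `L`-periodic `f`, the metric `g = f²(dx²+dy²)` satisfies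
`area(g) − (√3/2)·sys(g)² ≥ var(f)`. -/
theorem loewner_torus_inequality_with_defect
    (v w : ℂ) (hcovol : |v.re * w.im - v.im * w.re| = 1)
    (L : Set ℂ) (hL : L = {z : ℂ | ∃ m n : ℤ, z = (m : ℂ) * v + (n : ℂ) * w})
    (f : ℂ → ℝ) (hf : Continuous f) (hfpos : ∀ z, 0 < f z)
    (hper : ∀ z ∈ L, ∀ x : ℂ, f (x + z) = f x)
    (area mean var : ℝ)
    (harea : area = ∫ s in (0:ℝ)..1, ∫ t in (0:ℝ)..1, (f ((s : ℂ) * v + (t : ℂ) * w)) ^ 2)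
    (hmean : mean = ∫ s in (0:ℝ)..1, ∫ t in (0:ℝ)..1, f ((s : ℂ) * v + (t : ℂ) * w))
    (hvar : var = ∫ s in (0:ℝ)..1, ∫ t in (0:ℝ)..1,
      (f ((s : ℂ) * v + (t : ℂ) * w) - mean) ^ 2) :
    area - Real.sqrt 3 / 2 * systole L f ^ 2 ≥ var := by
  have hΛL : ∀ z ∈ span ℤ {v, w}, z ∈ L := fun z hz => by
    obtain ⟨m, n, rfl⟩ := mem_span_pair.1 hz
    exact hL ▸ ⟨m, n, by simp [zsmul_eq_mul]⟩
  set F : ℝ × ℝ → ℝ := fun p => f (p.1 • v + p.2 • w)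
  have hF : Continuous F := by fun_prop
  have hvar' : var = area - mean ^ 2 := by
    rw [hvar, harea, hmean]
    exact hF.intervalIntegral_intervalIntegral_sub_sq
  have hω : |Complex.orientation.areaForm v w| = 1 := by rwa [Complex.orientation_areaForm]
  obtain ⟨z, hzΛ, hz0, hz⟩ :=
    Complex.orientation.exists_mem_span_pair_ne_zero_sqrt_three_mul_norm_sq_le (v := v) (w := w)
      (fun h => by simp [h] at hω)
  obtain ⟨x, hx⟩ := exists_intervalIntegral_comp_add_smul_le_integral_unitSquare hf
    (hper v (hΛL v (subset_span (by simp)))) (hper w (hΛL w (subset_span (by simp))))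
    (span_le_restrictScalars ℤ ℝ _ hzΛ)
  have hmean' : mean = ∫ p, F p ∂unitSquare := hmean.trans hF.integral_unitSquare.symm
  have hsys : systole L f ≤ mean * ‖z‖ := hmean' ▸
    (systole_le_segment (fun z => (hfpos z).le) (hΛL z hzΛ) hz0 x).trans
      (mul_le_mul_of_nonneg_right hx (norm_nonneg _))
  have hsys_sq : systole L f ^ 2 ≤ (mean * ‖z‖) ^ 2 :=
    pow_le_pow_left₀ (systole_nonneg (fun z => (hfpos z).le) L) hsys 2
  rw [hω] at hz
  nlinarith [mul_le_mul_of_nonneg_left hsys_sq (Real.sqrt_nonneg 3),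
    mul_le_mul_of_nonneg_left hz (sq_nonneg mean)]
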